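/- If P is symmetric and y ≥ 0, then ∫_{(−∞,0]} φ(y − x) dP(x) ≤ ∫_{[0,∞)} φ(y − x) dP(x). Consequently, for symmetric P and y > 0 (and by symmetry for y < 0), the local false sign rate min(P(X ≤ 0 | Y = y), P(X ≥ 0 | Y = y)) equals the posterior probability P(XY ≤ 0 | Y = y). -/

import Mathlib

/-!
Reflecting the negative half-line onto the positive one via the symmetry of `P` turns
`∫_{x ≤ 0} φ(y - x) dP` into `∫_{x ≥ 0} φ(y + x) dP`, and for `x, y ≥ 0` the point `y + x` is
farther from the origin than `y - x`, so `φ(y + x) ≤ φ(y - x)`. Hence for `y > 0` the smaller of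
the two one-sided integrals is the one over `x ≤ 0`, which is exactly `{x | x y ≤ 0}`; the case
`y < 0` is the mirror image.
-/

open MeasureTheory Real

/-- The standard normal density. -/
noncomputable def phi (t : ℝ) : ℝ := (Real.sqrt (2 * Real.pi))⁻¹ * Real.exp (-(t ^ 2) / 2)

/-- The marginal density of `Y` in the signal-plus-noise model. -/
noncomputable def marginal (P : Measure ℝ) (y : ℝ) : ℝ := ∫ x, phi (y - x) ∂P

open Set

lemma phi_neg (t : ℝ) : phi (-t) = phi t := by simp [phi]

lemma continuous_phi : Continuous phi := by unfold phi; fun_prop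

lemma phi_le_phi_of_abs_le {s t : ℝ} (h : |s| ≤ |t|) : phi t ≤ phi s := by
  have hsq : s ^ 2 ≤ t ^ 2 := sq_le_sq.mpr h
  unfold phi
  gcongr ?_ * exp ?_
  linarith

lemma integrable_phi_comp {μ : Measure ℝ} [IsFiniteMeasure μ] {g : ℝ → ℝ} (hg : Measurable g) :
    Integrable (fun x => phi (g x)) μ :=
  Integrable.of_bound (continuous_phi.measurable.comp hg).aestronglyMeasurable (phi 0)
    (ae_of_all _ fun x => by
      rw [norm_of_nonneg (by unfold phi; positivity)]
      exact phi_le_phi_of_abs_le (by simp))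

section Symmetric

variable {P : Measure ℝ} (hsymm : Measure.map (fun x : ℝ => -x) P = P)
include hsymm

lemma setIntegral_Iic_eq_setIntegral_Ici_neg {E : Type*} [NormedAddCommGroup E]
    [NormedSpace ℝ E] (f : ℝ → E) :
    ∫ x in Iic 0, f x ∂P = ∫ x in Ici 0, f (-x) ∂P := by
  conv_lhs => rw [← hsymm]
  rw [measurableEmbedding_neg.setIntegral_map]
  simp

lemma setIntegral_Iic_phi_neg_sub (y : ℝ) :
    ∫ x in Iic 0, phi (-y - x) ∂P = ∫ x in Ici 0, phi (y - x) ∂P := by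
  rw [setIntegral_Iic_eq_setIntegral_Ici_neg hsymm]
  congr 1 with x
  rw [← phi_neg]
  ring_nf

lemma setIntegral_Iic_phi_sub_le [IsFiniteMeasure P] {y : ℝ} (hy : 0 ≤ y) :
    ∫ x in Iic 0, phi (y - x) ∂P ≤ ∫ x in Ici 0, phi (y - x) ∂P := by
  rw [setIntegral_Iic_eq_setIntegral_Ici_neg hsymm]
  refine setIntegral_mono_on (integrable_phi_comp (by fun_prop)).integrableOn
    (integrable_phi_comp (by fun_prop)).integrableOn measurableSet_Ici fun x hx => ?_
  apply phi_le_phi_of_abs_le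
  rw [sub_neg_eq_add, abs_of_nonneg (add_nonneg hy hx)]
  exact abs_sub_le_iff.mpr ⟨by linarith [mem_Ici.mp hx], by linarith⟩

lemma setIntegral_Ici_phi_sub_le [IsFiniteMeasure P] {y : ℝ} (hy : y ≤ 0) :
    ∫ x in Ici 0, phi (y - x) ∂P ≤ ∫ x in Iic 0, phi (y - x) ∂P := by
  calc ∫ x in Ici 0, phi (y - x) ∂P = ∫ x in Iic 0, phi (-y - x) ∂P :=
        (setIntegral_Iic_phi_neg_sub hsymm y).symm
    _ ≤ ∫ x in Ici 0, phi (-y - x) ∂P := setIntegral_Iic_phi_sub_le hsymm (neg_nonneg.mpr hy)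
    _ = ∫ x in Iic 0, phi (y - x) ∂P := by
        simpa using (setIntegral_Iic_phi_neg_sub hsymm (-y)).symm

end Symmetric

/-- for symmetric `P` and `y ≥ 0`,
`∫_{(-∞,0]} φ(y - x) dP(x) ≤ ∫_{[0,∞)} φ(y - x) dP(x)`; consequently for `y ≠ 0` the local
false sign rate `min(P(X ≤ 0 | Y = y), P(X ≥ 0 | Y = y))` equals the posterior probability
`P(XY ≤ 0 | Y = y)` (stated at the level of the unnormalized integrals). -/
theorem stmt11 (P : Measure ℝ) [IsProbabilityMeasure P]
    (hsymm : Measure.map (fun x : ℝ => -x) P = P) :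
    (∀ y : ℝ, 0 ≤ y →
      (∫ x in Set.Iic (0 : ℝ), phi (y - x) ∂P) ≤ ∫ x in Set.Ici (0 : ℝ), phi (y - x) ∂P) ∧
    (∀ y : ℝ, y ≠ 0 →
      min (∫ x in Set.Iic (0 : ℝ), phi (y - x) ∂P) (∫ x in Set.Ici (0 : ℝ), phi (y - x) ∂P) =
        ∫ x in {x : ℝ | x * y ≤ 0}, phi (y - x) ∂P) := by
  refine ⟨fun y hy => setIntegral_Iic_phi_sub_le hsymm hy, fun y hy => ?_⟩
  rcases hy.lt_or_gt with hneg | hpos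
  · have hset : {x : ℝ | x * y ≤ 0} = Ici 0 := by
      ext x; simpa using mul_le_mul_right_of_neg (a := x) (b := 0) hneg
    rw [hset]
    exact min_eq_right (setIntegral_Ici_phi_sub_le hsymm hneg.le)
  · have hset : {x : ℝ | x * y ≤ 0} = Iic 0 := by
      ext x; simpa using mul_le_mul_iff_of_pos_right (b := x) (c := 0) hpos
    rw [hset]
    exact min_eq_left (setIntegral_Iic_phi_sub_le hsymm hpos.le)
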